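/- Let 0 < α < 1 and β > 0, let φ be an analytic self-map of the open unit disk D, and let g be analytic on D. Then the operator C_φU_g, defined by (C_φU_g f)(z) = ∫₀^{φ(z)} f(ξ) g'(ξ) dξ, is bounded from Z^α to Z^β if and only if (g'∘φ)·φ'' + (g''∘φ)·(φ')² ∈ H_{v_β}^∞ and (g'∘φ)·(φ')² ∈ H_{v_β}^∞. -/

import Mathlib

noncomputable section

/-- The open unit disk in the complex plane. -/
def uD : Set ℂ := Metric.ball 0 1

/-- The Zygmund-type quantity `(1-|z|^2)^a * |f''(z)|`. -/
def zygS (a : ℝ) (f : ℂ → ℂ) (z : ℂ) : ℝ := (1 - ‖z‖ ^ 2) ^ a * ‖deriv (deriv f) z‖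

/-- Membership in the Zygmund-type space `Z^a`. -/
def memZ (a : ℝ) (f : ℂ → ℂ) : Prop :=
  AnalyticOn ℂ f uD ∧ ∃ M : ℝ, ∀ z ∈ uD, zygS a f z ≤ M

/-- The Zygmund-type norm `‖f‖_{Z^a} = |f 0| + |f' 0| + sup_{z ∈ D} (1-|z|^2)^a |f''(z)|`. -/
def zNorm (a : ℝ) (f : ℂ → ℂ) : ℝ := ‖f 0‖ + ‖deriv f 0‖ + sSup (zygS a f '' uD)

/-- Membership in the weighted space `H^∞_{v_b}` (for `u` analytic on `uD`). -/
def memHv (b : ℝ) (u : ℂ → ℂ) : Prop :=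
  ∃ M : ℝ, ∀ z ∈ uD, (1 - ‖z‖ ^ 2) ^ b * ‖u z‖ ≤ M

/-- `T` is a bounded operator from `Z^a` to `Z^b`. -/
def boundedOp (a b : ℝ) (T : (ℂ → ℂ) → ℂ → ℂ) : Prop :=
  (∀ f, memZ a f → memZ b (T f)) ∧
    ∃ C > 0, ∀ f, memZ a f → zNorm b (T f) ≤ C * zNorm a f

/-- `(C_φ U_g f)(z) = ∫₀^{φ(z)} f(ξ) g'(ξ) dξ`, parametrized along the segment from `0` to `φ z`. -/
def CphiUg (g φ : ℂ → ℂ) (f : ℂ → ℂ) : ℂ → ℂ :=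
  fun z => ∫ t in (0:ℝ)..1, φ z * (f ((t : ℂ) * φ z) * deriv g ((t : ℂ) * φ z))


/-! On the disk `f · g'` has a primitive `P`, so `C_φU_g f = P ∘ φ - P 0` and
`(C_φU_g f)'' = f'(φ) · g'(φ) φ'² + f(φ) · (g'(φ) φ'' + g''(φ) φ'²)`. Testing on `f = 1` and
`f = z` gives the two weighted conditions. Conversely, for `α < 1` the weight `(1 - t)^(-α)` is
integrable on `[0, 1]`, so integrating `f''` along radii bounds `f'`, and then `f`, on the disk by a
multiple of `‖f‖_{Z^α}`; the formula for the second derivative then bounds `C_φU_g f` in `Z^β`. -/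

open Metric MeasureTheory Set

lemma isOpen_uD : IsOpen uD := isOpen_ball

lemma zero_mem_uD : (0 : ℂ) ∈ uD := mem_ball_self one_pos

lemma starConvex_uD : StarConvex ℝ 0 uD := (convex_ball 0 1).starConvex zero_mem_uD

lemma norm_lt_one_of_mem_uD {z : ℂ} (hz : z ∈ uD) : ‖z‖ < 1 := mem_ball_zero_iff.1 hz

lemma ofReal_mul_mem {s : Set ℂ} (hs : StarConvex ℝ 0 s) {w : ℂ} (hw : w ∈ s) {t : ℝ}
    (ht : t ∈ Icc 0 1) : (t : ℂ) * w ∈ s := by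
  simpa [Complex.real_smul] using hs.smul_mem hw ht.1 ht.2

lemma rpow_weight_nonneg {z : ℂ} (hz : z ∈ uD) (b : ℝ) : 0 ≤ (1 - ‖z‖ ^ 2) ^ b := by
  have := norm_lt_one_of_mem_uD hz
  exact Real.rpow_nonneg (by nlinarith [norm_nonneg z]) b

lemma zygS_nonneg (a : ℝ) (f : ℂ → ℂ) {z : ℂ} (hz : z ∈ uD) : 0 ≤ zygS a f z :=
  mul_nonneg (rpow_weight_nonneg hz a) (norm_nonneg _)

theorem integral_mul_comp_ofReal_mul {s : Set ℂ} (hs : StarConvex ℝ 0 s) {P p : ℂ → ℂ}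
    (hP : ∀ z ∈ s, HasDerivAt P (p z) z) (hp : ContinuousOn p s) {w : ℂ} (hw : w ∈ s) :
    ∫ t in (0 : ℝ)..1, w * p ((t : ℂ) * w) = P w - P 0 := by
  have hseg : MapsTo (fun t : ℝ => (t : ℂ) * w) (Icc 0 1) s := fun t ht => ofReal_mul_mem hs hw ht
  have hderiv : ∀ t ∈ uIcc (0 : ℝ) 1,
      HasDerivAt (fun t : ℝ => P ((t : ℂ) * w)) (w * p ((t : ℂ) * w)) t := by
    intro t ht
    rw [uIcc_of_le zero_le_one] at ht
    have := ((hP _ (hseg ht)).comp (t : ℂ) ((hasDerivAt_id _).mul_const w)).comp_ofReal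
    simpa [mul_comm] using this
  have hint : IntervalIntegrable (fun t : ℝ => w * p ((t : ℂ) * w)) volume 0 1 := by
    refine ContinuousOn.intervalIntegrable ?_
    rw [uIcc_of_le zero_le_one]
    exact continuousOn_const.mul (hp.comp (by fun_prop) hseg)
  simp [intervalIntegral.integral_eq_sub_of_hasDerivAt hderiv hint]

variable {φ g f : ℂ → ℂ}

lemma CphiUg_eqOn_comp_sub {P : ℂ → ℂ} (hP : ∀ z ∈ uD, HasDerivAt P (f z * deriv g z) z)
    (hfg : ContinuousOn (fun z => f z * deriv g z) uD) (hφm : MapsTo φ uD uD) :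
    EqOn (CphiUg g φ f) (fun z => P (φ z) - P 0) uD := fun _ hz =>
  integral_mul_comp_ofReal_mul starConvex_uD hP hfg (hφm hz)

lemma hasDerivAt_CphiUg (hφ : AnalyticOnNhd ℂ φ uD) (hφm : MapsTo φ uD uD)
    (hg : AnalyticOnNhd ℂ g uD) (hf : AnalyticOnNhd ℂ f uD) {z : ℂ} (hz : z ∈ uD) :
    HasDerivAt (CphiUg g φ f) (f (φ z) * deriv g (φ z) * deriv φ z) z := by
  have hfg : AnalyticOnNhd ℂ (fun z => f z * deriv g z) uD := hf.mul hg.deriv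
  obtain ⟨P, hP⟩ := hfg.differentiableOn.isExactOn_ball
  have hT : CphiUg g φ f =ᶠ[nhds z] fun z => P (φ z) - P 0 :=
    Filter.eventually_of_mem (isOpen_uD.mem_nhds hz)
      (CphiUg_eqOn_comp_sub hP hfg.continuousOn hφm)
  exact (((hP _ (hφm hz)).comp z (hφ z hz).differentiableAt.hasDerivAt).sub_const
    (P 0)).congr_of_eventuallyEq hT

lemma deriv_deriv_CphiUg (hφ : AnalyticOnNhd ℂ φ uD) (hφm : MapsTo φ uD uD)
    (hg : AnalyticOnNhd ℂ g uD) (hf : AnalyticOnNhd ℂ f uD) {z : ℂ} (hz : z ∈ uD) :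
    deriv (deriv (CphiUg g φ f)) z =
      deriv f (φ z) * (deriv g (φ z) * deriv φ z ^ 2) +
        f (φ z) * (deriv g (φ z) * deriv (deriv φ) z + deriv (deriv g) (φ z) * deriv φ z ^ 2) := by
  have hT' : deriv (CphiUg g φ f) =ᶠ[nhds z] fun w => f (φ w) * deriv g (φ w) * deriv φ w :=
    Filter.eventually_of_mem (isOpen_uD.mem_nhds hz)
      fun w hw => (hasDerivAt_CphiUg hφ hφm hg hf hw).deriv
  have hφ' := (hφ z hz).differentiableAt.hasDerivAt
  have hfφ := (hf _ (hφm hz)).differentiableAt.hasDerivAt.comp z hφ'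
  have hgφ := (hg.deriv _ (hφm hz)).differentiableAt.hasDerivAt.comp z hφ'
  have hφ'' := (hφ.deriv z hz).differentiableAt.hasDerivAt
  rw [hT'.deriv_eq]
  refine ((hfφ.mul hgφ).mul hφ'').deriv.trans ?_
  simp only [Pi.mul_apply, Function.comp_apply]
  ring

lemma intervalIntegrable_one_sub_rpow_neg {α : ℝ} (hα : α < 1) :
    IntervalIntegrable (fun t : ℝ => (1 - t) ^ (-α)) volume 0 1 := by
  have h := intervalIntegral.intervalIntegrable_rpow' (a := 0) (b := 1) (by linarith : -1 < -α)
  simpa using (h.comp_sub_left 1).symm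

lemma integral_one_sub_rpow_neg {α : ℝ} (hα : α < 1) :
    ∫ t in (0 : ℝ)..1, (1 - t) ^ (-α) = 1 / (1 - α) := by
  rw [intervalIntegral.integral_comp_sub_left (fun t : ℝ => t ^ (-α)) 1,
    integral_rpow (Or.inl (by linarith)), sub_self, sub_zero, neg_add_eq_sub, Real.zero_rpow (by linarith), Real.one_rpow, sub_zero]

lemma norm_mul_deriv_deriv_le_of_zygS {α S : ℝ} (hα : 0 ≤ α) (hS : ∀ z ∈ uD, zygS α f z ≤ S)
    {w : ℂ} (hw : w ∈ uD) {t : ℝ} (ht₀ : 0 ≤ t) (ht₁ : t < 1) :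
    ‖w * deriv (deriv f) ((t : ℂ) * w)‖ ≤ S * (1 - t) ^ (-α) := by
  have htw : (t : ℂ) * w ∈ uD := ofReal_mul_mem starConvex_uD hw ⟨ht₀, ht₁.le⟩
  set m := ‖(t : ℂ) * w‖
  have hw1 := norm_lt_one_of_mem_uD hw
  have hm : m ≤ t := by
    simpa [m, norm_mul, abs_of_nonneg ht₀] using mul_le_of_le_one_right ht₀ hw1.le
  have hmt : 1 - t ≤ 1 - m ^ 2 := by nlinarith [norm_nonneg ((t : ℂ) * w)]
  have ht : 0 < 1 - t := by linarith
  have hS0 : 0 ≤ S := (zygS_nonneg α f htw).trans (hS _ htw)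
  have hf'' : ‖deriv (deriv f) ((t : ℂ) * w)‖ = (1 - m ^ 2) ^ (-α) * zygS α f ((t : ℂ) * w) := by
    rw [zygS, Real.rpow_neg (ht.le.trans hmt), inv_mul_cancel_left₀
      (Real.rpow_pos_of_pos (ht.trans_le hmt) α).ne']
  calc ‖w * deriv (deriv f) ((t : ℂ) * w)‖
      ≤ ‖deriv (deriv f) ((t : ℂ) * w)‖ := by
        rw [norm_mul]; exact mul_le_of_le_one_left (norm_nonneg _) hw1.le
    _ ≤ (1 - t) ^ (-α) * S := by
        rw [hf'']
        exact mul_le_mul (Real.rpow_le_rpow_of_nonpos ht hmt (by linarith)) (hS _ htw)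
          (zygS_nonneg α f htw) (by positivity)
    _ = S * (1 - t) ^ (-α) := mul_comm _ _

lemma norm_deriv_sub_deriv_zero_le {α S : ℝ} (hα₀ : 0 ≤ α) (hα₁ : α < 1)
    (hf : AnalyticOnNhd ℂ f uD) (hS : ∀ z ∈ uD, zygS α f z ≤ S) {w : ℂ} (hw : w ∈ uD) :
    ‖deriv f w - deriv f 0‖ ≤ S / (1 - α) := by
  rw [← integral_mul_comp_ofReal_mul starConvex_uD
    (fun z hz => (hf.deriv z hz).differentiableAt.hasDerivAt) hf.deriv.deriv.continuousOn hw]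
  calc ‖∫ t in (0 : ℝ)..1, w * deriv (deriv f) ((t : ℂ) * w)‖
      ≤ ∫ t in (0 : ℝ)..1, S * (1 - t) ^ (-α) := by
        refine intervalIntegral.norm_integral_le_of_norm_le zero_le_one ?_
          ((intervalIntegrable_one_sub_rpow_neg hα₁).const_mul S)
        -- at `t = 1` the bound is the junk value `0 ^ (-α) = 0`, hence only almost everywhere
        filter_upwards [Measure.ae_ne volume 1] with t ht1 ht
        exact norm_mul_deriv_deriv_le_of_zygS hα₀ hS hw ht.1.le (lt_of_le_of_ne ht.2 ht1)
    _ = S / (1 - α) := by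
        rw [intervalIntegral.integral_const_mul, integral_one_sub_rpow_neg hα₁, mul_one_div]

namespace memZ

variable {a : ℝ}

lemma bddAbove_zygS (hf : memZ a f) : BddAbove (zygS a f '' uD) := by
  obtain ⟨-, M, hM⟩ := hf
  exact ⟨M, by rintro _ ⟨z, hz, rfl⟩; exact hM z hz⟩

lemma zygS_le_sSup (hf : memZ a f) {z : ℂ} (hz : z ∈ uD) :
    zygS a f z ≤ sSup (zygS a f '' uD) :=
  le_csSup hf.bddAbove_zygS ⟨z, hz, rfl⟩

lemma sSup_zygS_nonneg (hf : memZ a f) : 0 ≤ sSup (zygS a f '' uD) :=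
  (zygS_nonneg a f zero_mem_uD).trans (hf.zygS_le_sSup zero_mem_uD)

lemma zNorm_nonneg (hf : memZ a f) : 0 ≤ zNorm a f :=
  add_nonneg (add_nonneg (norm_nonneg _) (norm_nonneg _)) hf.sSup_zygS_nonneg

lemma norm_deriv_le {α : ℝ} (hα₀ : 0 ≤ α) (hα₁ : α < 1) (hf : memZ α f) {w : ℂ} (hw : w ∈ uD) :
    ‖deriv f w‖ ≤ (1 + 1 / (1 - α)) * zNorm α f := by
  have hfN := isOpen_uD.analyticOn_iff_analyticOnNhd.1 hf.1
  have hsub := norm_deriv_sub_deriv_zero_le hα₀ hα₁ hfN (fun z hz => hf.zygS_le_sSup hz) hw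
  have h1α : 0 < 1 - α := by linarith
  have hS_le : sSup (zygS α f '' uD) ≤ zNorm α f := by
    simp only [zNorm]; linarith [norm_nonneg (f 0), norm_nonneg (deriv f 0)]
  calc ‖deriv f w‖ ≤ ‖deriv f 0‖ + ‖deriv f w - deriv f 0‖ := norm_le_norm_add_norm_sub' _ _
    _ ≤ zNorm α f + zNorm α f / (1 - α) := by
        gcongr
        · simp only [zNorm]; linarith [norm_nonneg (f 0), hf.sSup_zygS_nonneg]
        · exact hsub.trans (by gcongr)
    _ = (1 + 1 / (1 - α)) * zNorm α f := by ring

lemma norm_le {α : ℝ} (hα₀ : 0 ≤ α) (hα₁ : α < 1) (hf : memZ α f) {w : ℂ} (hw : w ∈ uD) :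
    ‖f w‖ ≤ (2 + 1 / (1 - α)) * zNorm α f := by
  have hfN := isOpen_uD.analyticOn_iff_analyticOnNhd.1 hf.1
  have hsub := (convex_ball (0 : ℂ) 1).norm_image_sub_le_of_norm_deriv_le
    (fun z hz => (hfN z hz).differentiableAt) (fun z hz => hf.norm_deriv_le hα₀ hα₁ hz)
    zero_mem_uD hw
  have hN := hf.zNorm_nonneg
  have h1α : 0 < 1 - α := by linarith
  have hc : 0 ≤ (1 + 1 / (1 - α)) * zNorm α f := by positivity
  calc ‖f w‖ ≤ ‖f 0‖ + ‖f w - f 0‖ := norm_le_norm_add_norm_sub' _ _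
    _ ≤ zNorm α f + (1 + 1 / (1 - α)) * zNorm α f := by
        gcongr
        · simp only [zNorm]; linarith [norm_nonneg (deriv f 0), hf.sSup_zygS_nonneg]
        · rw [sub_zero] at hsub
          exact hsub.trans (mul_le_of_le_one_right hc (norm_lt_one_of_mem_uD hw).le)
    _ = (2 + 1 / (1 - α)) * zNorm α f := by ring

end memZ

lemma memZ_const (a : ℝ) (c : ℂ) : memZ a fun _ => c :=
  ⟨analyticOnNhd_const.analyticOn, 0, fun z _ => by simp [zygS]⟩

lemma memZ_id (a : ℝ) : memZ a fun w => w :=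
  ⟨analyticOnNhd_id.analyticOn, 0, fun z _ => by simp [zygS, deriv_id'']⟩

theorem memHv_of_mapsTo_memZ {α β : ℝ} (hφ : AnalyticOnNhd ℂ φ uD) (hφm : MapsTo φ uD uD)
    (hg : AnalyticOnNhd ℂ g uD) (hT : ∀ f, memZ α f → memZ β (CphiUg g φ f)) :
    memHv β (fun z => deriv g (φ z) * deriv (deriv φ) z + deriv (deriv g) (φ z) * (deriv φ z) ^ 2) ∧
      memHv β (fun z => deriv g (φ z) * (deriv φ z) ^ 2) := by
  obtain ⟨-, M₁, hM₁⟩ := hT _ (memZ_const α 1)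
  obtain ⟨-, M₂, hM₂⟩ := hT _ (memZ_id α)
  set A := fun z => deriv g (φ z) * deriv (deriv φ) z + deriv (deriv g) (φ z) * (deriv φ z) ^ 2
  set B := fun z => deriv g (φ z) * (deriv φ z) ^ 2
  have hA : ∀ z ∈ uD, (1 - ‖z‖ ^ 2) ^ β * ‖A z‖ ≤ M₁ := fun z hz => by
    simpa [zygS, deriv_deriv_CphiUg hφ hφm hg analyticOnNhd_const hz] using hM₁ z hz
  refine ⟨⟨M₁, hA⟩, M₂ + M₁, fun z hz => ?_⟩
  have hAB : (1 - ‖z‖ ^ 2) ^ β * ‖B z + φ z * A z‖ ≤ M₂ := by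
    simpa [zygS, deriv_deriv_CphiUg hφ hφm hg analyticOnNhd_id hz, deriv_id''] using hM₂ z hz
  have hφA : ‖φ z * A z‖ ≤ ‖A z‖ := by
    rw [norm_mul]; exact mul_le_of_le_one_left (norm_nonneg _) (norm_lt_one_of_mem_uD (hφm hz)).le
  have hB : ‖B z‖ ≤ ‖B z + φ z * A z‖ + ‖A z‖ := by
    simpa using (norm_sub_le (B z + φ z * A z) (φ z * A z)).trans (by gcongr)
  calc (1 - ‖z‖ ^ 2) ^ β * ‖B z‖
      ≤ (1 - ‖z‖ ^ 2) ^ β * (‖B z + φ z * A z‖ + ‖A z‖) :=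
        mul_le_mul_of_nonneg_left hB (rpow_weight_nonneg hz β)
    _ ≤ M₂ + M₁ := by rw [mul_add]; exact add_le_add hAB (hA z hz)

lemma norm_CphiUg_zero_le {B G : ℝ} (hφ0 : φ 0 ∈ uD) (hfB : ∀ w ∈ uD, ‖f w‖ ≤ B) (hB : 0 ≤ B)
    (hG : ∀ w ∈ closedBall (0 : ℂ) ‖φ 0‖, ‖deriv g w‖ ≤ G) : ‖CphiUg g φ f 0‖ ≤ B * G := by
  have hint := intervalIntegral.norm_integral_le_of_norm_le_const (a := 0) (b := 1) (C := B * G)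
    (f := fun t : ℝ => φ 0 * (f ((t : ℂ) * φ 0) * deriv g ((t : ℂ) * φ 0))) fun t ht => by
      rw [uIoc_of_le zero_le_one] at ht
      have htD := ofReal_mul_mem starConvex_uD hφ0 ⟨ht.1.le, ht.2⟩
      have htB : (t : ℂ) * φ 0 ∈ closedBall 0 ‖φ 0‖ := by
        rw [mem_closedBall_zero_iff, norm_mul, Complex.norm_real, Real.norm_of_nonneg ht.1.le]
        exact mul_le_of_le_one_left (norm_nonneg _) ht.2
      rw [norm_mul, norm_mul]
      exact (mul_le_of_le_one_left (by positivity) (norm_lt_one_of_mem_uD hφ0).le).trans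
        (mul_le_mul (hfB _ htD) (hG _ htB) (norm_nonneg _) hB)
  simpa [CphiUg] using hint

section Sufficiency

variable {α β M₁ M₂ : ℝ}

lemma zygS_CphiUg_le (hα₀ : 0 ≤ α) (hα₁ : α < 1) (hφ : AnalyticOnNhd ℂ φ uD)
    (hφm : MapsTo φ uD uD) (hg : AnalyticOnNhd ℂ g uD)
    (hM₁ : ∀ z ∈ uD, (1 - ‖z‖ ^ 2) ^ β *
      ‖deriv g (φ z) * deriv (deriv φ) z + deriv (deriv g) (φ z) * (deriv φ z) ^ 2‖ ≤ M₁)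
    (hM₂ : ∀ z ∈ uD, (1 - ‖z‖ ^ 2) ^ β * ‖deriv g (φ z) * (deriv φ z) ^ 2‖ ≤ M₂)
    (hf : memZ α f) {z : ℂ} (hz : z ∈ uD) :
    zygS β (CphiUg g φ f) z ≤ (2 + 1 / (1 - α)) * (M₁ + M₂) * zNorm α f := by
  have hfN := isOpen_uD.analyticOn_iff_analyticOnNhd.1 hf.1
  rw [zygS, deriv_deriv_CphiUg hφ hφm hg hfN hz]
  set A := deriv g (φ z) * deriv (deriv φ) z + deriv (deriv g) (φ z) * (deriv φ z) ^ 2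
  set B := deriv g (φ z) * (deriv φ z) ^ 2
  set v := (1 - ‖z‖ ^ 2) ^ β
  have hv : 0 ≤ v := rpow_weight_nonneg hz β
  have h1α : 0 < 1 - α := by linarith
  have hcN : 0 ≤ (2 + 1 / (1 - α)) * zNorm α f := by have := hf.zNorm_nonneg; positivity
  have hf' : ‖deriv f (φ z)‖ ≤ (2 + 1 / (1 - α)) * zNorm α f :=
    (hf.norm_deriv_le hα₀ hα₁ (hφm hz)).trans (by have := hf.zNorm_nonneg; gcongr; norm_num)
  calc v * ‖deriv f (φ z) * B + f (φ z) * A‖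
      ≤ v * (‖deriv f (φ z)‖ * ‖B‖ + ‖f (φ z)‖ * ‖A‖) := by
        gcongr
        simpa only [norm_mul] using norm_add_le (deriv f (φ z) * B) (f (φ z) * A)
    _ = ‖deriv f (φ z)‖ * (v * ‖B‖) + ‖f (φ z)‖ * (v * ‖A‖) := by ring
    _ ≤ (2 + 1 / (1 - α)) * zNorm α f * M₂ + (2 + 1 / (1 - α)) * zNorm α f * M₁ :=
        add_le_add (mul_le_mul hf' (hM₂ z hz) (mul_nonneg hv (norm_nonneg _)) hcN)
          (mul_le_mul (hf.norm_le hα₀ hα₁ (hφm hz)) (hM₁ z hz) (mul_nonneg hv (norm_nonneg _)) hcN)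
    _ = (2 + 1 / (1 - α)) * (M₁ + M₂) * zNorm α f := by ring

lemma zNorm_CphiUg_le {G : ℝ} (hα₀ : 0 ≤ α) (hα₁ : α < 1) (hφ : AnalyticOnNhd ℂ φ uD)
    (hφm : MapsTo φ uD uD) (hg : AnalyticOnNhd ℂ g uD)
    (hG : ∀ w ∈ closedBall (0 : ℂ) ‖φ 0‖, ‖deriv g w‖ ≤ G)
    (hM₁ : ∀ z ∈ uD, (1 - ‖z‖ ^ 2) ^ β *
      ‖deriv g (φ z) * deriv (deriv φ) z + deriv (deriv g) (φ z) * (deriv φ z) ^ 2‖ ≤ M₁)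
    (hM₂ : ∀ z ∈ uD, (1 - ‖z‖ ^ 2) ^ β * ‖deriv g (φ z) * (deriv φ z) ^ 2‖ ≤ M₂)
    (hf : memZ α f) :
    zNorm β (CphiUg g φ f) ≤
      (2 + 1 / (1 - α)) * (G * (1 + ‖deriv φ 0‖) + M₁ + M₂) * zNorm α f := by
  have hfN := isOpen_uD.analyticOn_iff_analyticOnNhd.1 hf.1
  have hφ0 := hφm zero_mem_uD
  have h1α : 0 < 1 - α := by linarith
  have hcN : 0 ≤ (2 + 1 / (1 - α)) * zNorm α f := by have := hf.zNorm_nonneg; positivity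
  have hfB := fun w (hw : w ∈ uD) => hf.norm_le hα₀ hα₁ hw
  have hT₀ := norm_CphiUg_zero_le hφ0 hfB hcN hG
  have hT₁ : ‖deriv (CphiUg g φ f) 0‖ ≤ (2 + 1 / (1 - α)) * zNorm α f * G * ‖deriv φ 0‖ := by
    rw [(hasDerivAt_CphiUg hφ hφm hg hfN zero_mem_uD).deriv, norm_mul, norm_mul]
    gcongr
    · exact hfB _ hφ0
    · exact hG _ (mem_closedBall_zero_iff.2 le_rfl)
  have hT₂ : sSup (zygS β (CphiUg g φ f) '' uD) ≤ (2 + 1 / (1 - α)) * (M₁ + M₂) * zNorm α f :=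
    csSup_le ⟨_, 0, zero_mem_uD, rfl⟩ <| by
      rintro _ ⟨z, hz, rfl⟩
      exact zygS_CphiUg_le hα₀ hα₁ hφ hφm hg hM₁ hM₂ hf hz
  calc zNorm β (CphiUg g φ f)
      = ‖CphiUg g φ f 0‖ + ‖deriv (CphiUg g φ f) 0‖ + sSup (zygS β (CphiUg g φ f) '' uD) := rfl
    _ ≤ _ := by linarith

theorem boundedOp_CphiUg_of_memHv (hα₀ : 0 ≤ α) (hα₁ : α < 1) (hφ : AnalyticOnNhd ℂ φ uD)
    (hφm : MapsTo φ uD uD) (hg : AnalyticOnNhd ℂ g uD)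
    (hA : memHv β fun z =>
      deriv g (φ z) * deriv (deriv φ) z + deriv (deriv g) (φ z) * (deriv φ z) ^ 2)
    (hB : memHv β fun z => deriv g (φ z) * (deriv φ z) ^ 2) :
    boundedOp α β (CphiUg g φ) := by
  obtain ⟨M₁, hM₁⟩ := hA
  obtain ⟨M₂, hM₂⟩ := hB
  have hball : closedBall (0 : ℂ) ‖φ 0‖ ⊆ uD :=
    closedBall_subset_ball (norm_lt_one_of_mem_uD (hφm zero_mem_uD))
  obtain ⟨G, hG⟩ := (isCompact_closedBall (0 : ℂ) ‖φ 0‖).exists_bound_of_continuousOn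
    (hg.deriv.continuousOn.mono hball)
  have hG0 : 0 ≤ G := (norm_nonneg _).trans (hG 0 (mem_closedBall_self (norm_nonneg _)))
  have hM0 : ∀ {M : ℝ} {u : ℂ → ℂ}, (∀ z ∈ uD, (1 - ‖z‖ ^ 2) ^ β * ‖u z‖ ≤ M) → 0 ≤ M :=
    fun hM => (mul_nonneg (rpow_weight_nonneg zero_mem_uD β) (norm_nonneg _)).trans
      (hM 0 zero_mem_uD)
  have h1α : 0 < 1 - α := by linarith
  have hM₁0 := hM0 hM₁
  have hM₂0 := hM0 hM₂
  refine ⟨fun f hf => ⟨?_, _, fun z hz => zygS_CphiUg_le hα₀ hα₁ hφ hφm hg hM₁ hM₂ hf hz⟩,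
    (2 + 1 / (1 - α)) * (G * (1 + ‖deriv φ 0‖) + M₁ + M₂) + 1, by positivity, fun f hf => ?_⟩
  · have hfN := isOpen_uD.analyticOn_iff_analyticOnNhd.1 hf.1
    exact (DifferentiableOn.analyticOnNhd (fun z hz =>
      (hasDerivAt_CphiUg hφ hφm hg hfN hz).differentiableAt.differentiableWithinAt)
      isOpen_uD).analyticOn
  · exact (zNorm_CphiUg_le hα₀ hα₁ hφ hφm hg hG hM₁ hM₂ hf).trans
      (mul_le_mul_of_nonneg_right (by linarith) hf.zNorm_nonneg)

end Sufficiency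

theorem stmt_6_general (α β : ℝ) (hα0 : 0 < α) (hα1 : α < 1)
    (φ g : ℂ → ℂ) (hφ : AnalyticOn ℂ φ uD) (hφm : Set.MapsTo φ uD uD)
    (hg : AnalyticOn ℂ g uD) :
    boundedOp α β (CphiUg g φ) ↔
      (memHv β (fun z => deriv g (φ z) * deriv (deriv φ) z + deriv (deriv g) (φ z) * (deriv φ z) ^ 2) ∧ memHv β (fun z => deriv g (φ z) * (deriv φ z) ^ 2)) := by
  rw [isOpen_uD.analyticOn_iff_analyticOnNhd] at hφ hg
  exact ⟨fun hT => memHv_of_mapsTo_memZ hφ hφm hg hT.1,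
    fun ⟨hA, hB⟩ => boundedOp_CphiUg_of_memHv hα0.le hα1 hφ hφm hg hA hB⟩

theorem stmt_6 (α β : ℝ) (hα0 : 0 < α) (hα1 : α < 1) (hβ : 0 < β)
    (φ g : ℂ → ℂ) (hφ : AnalyticOn ℂ φ uD) (hφm : Set.MapsTo φ uD uD)
    (hg : AnalyticOn ℂ g uD) :
    boundedOp α β (CphiUg g φ) ↔
      (memHv β (fun z => deriv g (φ z) * deriv (deriv φ) z + deriv (deriv g) (φ z) * (deriv φ z) ^ 2) ∧ memHv β (fun z => deriv g (φ z) * (deriv φ z) ^ 2)) :=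
  stmt_6_general α β hα0 hα1 φ g hφ hφm hg
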